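/- arXiv:2009.12511 — 3 statements merged into one kernel-verified Lean document; each statement's English description precedes it below -/
import Mathlib

section
/- For all preference vectors v ≤ v' in [0,1]^S and every x ∈ ℝ, the CDFs of the MNL distributions satisfy |F(S,v';x) − F(S,v;x)| ≤ (3/D(v)) · Σ_{i∈S}(v'_i − v_i). -/
/-- `D(v) = 1 + ∑_{i∈S} v i`, the MNL normalization constant. -/
noncomputable def mnlD {ι : Type*} (S : Finset ι) (v : ι → ℝ) : ℝ := 1 + ∑ i ∈ S, v i

/-- The CDF of the purchase-profit distribution of the MNL model. -/
noncomputable def mnlCDF {ι : Type*} (S : Finset ι) (r v : ι → ℝ) (x : ℝ) : ℝ :=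
  if x < 0 then 0
  else (1 + ∑ i ∈ S.filter (fun i => r i ≤ x), v i) / mnlD S v

/-- **Lemma (pointwise Lipschitz bound for the MNL CDF).**
For `v ≤ v'` in `[0,1]^S` and every `x ∈ ℝ`,
`|F(S,v';x) − F(S,v;x)| ≤ (3/D(v)) ∑_{i∈S} (v' i − v i)`. -/
theorem mnlCDF_lipschitz {ι : Type*} (S : Finset ι) (r : ι → ℝ)
    (hr : ∀ i ∈ S, 0 < r i ∧ r i ≤ 1)
    (v v' : ι → ℝ) (hv : ∀ i ∈ S, 0 ≤ v i ∧ v i ≤ 1) (hv' : ∀ i ∈ S, 0 ≤ v' i ∧ v' i ≤ 1)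
    (hle : ∀ i ∈ S, v i ≤ v' i) (x : ℝ) :
    |mnlCDF S r v' x - mnlCDF S r v x| ≤ (3 / mnlD S v) * ∑ i ∈ S, (v' i - v i) := by
  set T := S.filter (fun i => r i ≤ x) with hT
  have hTS : T ⊆ S := Finset.filter_subset _ _
  set Δ : ℝ := ∑ i ∈ S, (v' i - v i) with hΔdef
  have hΔ : 0 ≤ Δ := Finset.sum_nonneg fun i hi => sub_nonneg.2 (hle i hi)
  have hD : (1:ℝ) ≤ mnlD S v :=
    le_add_of_nonneg_right (Finset.sum_nonneg fun i hi => (hv i hi).1)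
  have hDpos : (0:ℝ) < mnlD S v := lt_of_lt_of_le one_pos hD
  by_cases hx : x < 0
  · simp only [mnlCDF, if_pos hx, sub_zero, abs_zero]
    exact mul_nonneg (by positivity) hΔ
  · simp only [mnlCDF, if_neg hx, ← hT]
    set A : ℝ := 1 + ∑ i ∈ T, v i with hA
    set A' : ℝ := 1 + ∑ i ∈ T, v' i with hA'
    set δ : ℝ := ∑ i ∈ T, (v' i - v i) with hδ
    have hδnn : 0 ≤ δ := Finset.sum_nonneg fun i hi => sub_nonneg.2 (hle i (hTS hi))
    have hδΔ : δ ≤ Δ :=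
      Finset.sum_le_sum_of_subset_of_nonneg hTS
        (fun i hi _ => sub_nonneg.2 (hle i hi))
    have hA'eq : A' = A + δ := by
      simp [hA, hA', hδ, Finset.sum_sub_distrib]
    have hD'eq : mnlD S v' = mnlD S v + Δ := by
      simp [mnlD, hΔdef, Finset.sum_sub_distrib]
    have hD'pos : 0 < mnlD S v' := by rw [hD'eq]; linarith
    have hAD : A ≤ mnlD S v := by
      have := Finset.sum_le_sum_of_subset_of_nonneg hTS
        (fun i hi _ => (hv i hi).1)
      simp only [hA, mnlD]; linarith
    have hAnn : (0:ℝ) ≤ A := by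
      have : (0:ℝ) ≤ ∑ i ∈ T, v i := Finset.sum_nonneg fun i hi => (hv i (hTS hi)).1
      simp [hA]; linarith
    rw [div_sub_div _ _ (ne_of_gt hD'pos) (ne_of_gt hDpos), abs_div,
      abs_of_pos (mul_pos hD'pos hDpos), div_le_iff₀ (mul_pos hD'pos hDpos)]
    have hrhs : 3 / mnlD S v * Δ * (mnlD S v' * mnlD S v) = 3 * Δ * mnlD S v' := by
      field_simp
    rw [hrhs]
    have hnum : A' * mnlD S v - mnlD S v' * A = δ * mnlD S v - A * Δ := by
      rw [hA'eq, hD'eq]; ring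
    rw [hnum, abs_le]
    constructor
    · nlinarith [mul_nonneg hΔ (sub_nonneg.2 hAD), mul_nonneg hδnn hΔ,
        mul_nonneg hΔ hΔ, mul_nonneg hΔ hDpos.le]
    · nlinarith [mul_le_mul hδΔ (le_of_eq rfl : mnlD S v ≤ mnlD S v) hDpos.le hΔ,
        mul_nonneg hAnn hΔ, mul_nonneg hΔ hΔ, mul_nonneg hΔ hDpos.le]
end

section
/- Fix α ∈ (0,1] and define the conditional value-at-risk of the MNL distribution by CVaR_α(v) = (1/α)·(α − ∫_0^1 min{F(S,v;x), α} dx). Then (a) 0 ≤ CVaR_α(v) ≤ 1 for every v ∈ [0,1]^S; and (b) for all v ≤ v' in [0,1]^S, |CVaR_α(v') − CVaR_α(v)| ≤ ((3/α)/D(v)) · Σ_{i∈S}(v'_i − v_i). -/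
open MeasureTheory

/-- The conditional value-at-risk at level `α` of the MNL purchase-profit distribution:
`CVaR_α(v) = (1/α)(α − ∫_0^1 min{F(S,v;x), α} dx)`. -/
noncomputable def mnlCVaR {ι : Type*} (S : Finset ι) (r : ι → ℝ) (α : ℝ) (v : ι → ℝ) : ℝ :=
  (1 / α) * (α - ∫ x in (0:ℝ)..1, min (mnlCDF S r v x) α)

lemma mnlD_one_le {ι : Type*} (S : Finset ι) (v : ι → ℝ) (hv : ∀ i ∈ S, 0 ≤ v i) :
    1 ≤ mnlD S v :=
  le_add_of_nonneg_right (Finset.sum_nonneg hv)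

lemma mnlCDF_nonneg {ι : Type*} (S : Finset ι) (r v : ι → ℝ) (hv : ∀ i ∈ S, 0 ≤ v i) (x : ℝ) :
    0 ≤ mnlCDF S r v x := by
  unfold mnlCDF
  split
  · exact le_refl 0
  · apply div_nonneg
    · have : 0 ≤ ∑ i ∈ S.filter (fun i => r i ≤ x), v i :=
        Finset.sum_nonneg fun i hi => hv i (Finset.mem_filter.mp hi).1
      linarith
    · linarith [mnlD_one_le S v hv]

lemma mnlCDF_mono {ι : Type*} (S : Finset ι) (r v : ι → ℝ) (hv : ∀ i ∈ S, 0 ≤ v i) :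
    MonotoneOn (mnlCDF S r v) (Set.Icc (0:ℝ) 1) := by
  intro x hx y hy hxy
  unfold mnlCDF
  rw [if_neg (not_lt.mpr hx.1), if_neg (not_lt.mpr hy.1)]
  have hD : 0 < mnlD S v := lt_of_lt_of_le one_pos (mnlD_one_le S v hv)
  have hsub : S.filter (fun i => r i ≤ x) ⊆ S.filter (fun i => r i ≤ y) := by
    intro i hi
    rw [Finset.mem_filter] at hi ⊢
    exact ⟨hi.1, hi.2.trans hxy⟩
  have hnum : (1 + ∑ i ∈ S.filter (fun i => r i ≤ x), v i) ≤
      (1 + ∑ i ∈ S.filter (fun i => r i ≤ y), v i) := by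
    have := Finset.sum_le_sum_of_subset_of_nonneg hsub
      (fun i hi _ => hv i (Finset.mem_filter.mp hi).1)
    linarith
  exact div_le_div_of_nonneg_right hnum hD.le

lemma min_intIntegrable {ι : Type*} (S : Finset ι) (r v : ι → ℝ) (hv : ∀ i ∈ S, 0 ≤ v i)
    (α : ℝ) : IntervalIntegrable (fun x => min (mnlCDF S r v x) α) volume 0 1 := by
  apply MonotoneOn.intervalIntegrable
  rw [Set.uIcc_of_le (by norm_num : (0:ℝ) ≤ 1)]
  exact fun x hx y hy hxy => min_le_min (mnlCDF_mono S r v hv hx hy hxy) le_rfl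

lemma min_lip (a b c : ℝ) : |min a c - min b c| ≤ |a - b| := by
  rcases le_total a c with h1 | h1 <;> rcases le_total b c with h2 | h2
  · rw [min_eq_left h1, min_eq_left h2]
  · rw [min_eq_left h1, min_eq_right h2, abs_le]
    exact ⟨by linarith [neg_abs_le (a - b)], by linarith [abs_nonneg (a - b)]⟩
  · rw [min_eq_right h1, min_eq_left h2, abs_le]
    exact ⟨by linarith [abs_nonneg (a - b)], by linarith [le_abs_self (a - b)]⟩
  · rw [min_eq_right h1, min_eq_right h2]
    simp [abs_nonneg]

/-- Pointwise Lipschitz bound for the CDF. -/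
lemma mnlCDF_diff {ι : Type*} (S : Finset ι) (r : ι → ℝ) (v v' : ι → ℝ)
    (hv : ∀ i ∈ S, 0 ≤ v i) (hvv' : ∀ i ∈ S, v i ≤ v' i) (x : ℝ) (hx : 0 ≤ x) :
    |mnlCDF S r v' x - mnlCDF S r v x| ≤ (∑ i ∈ S, (v' i - v i)) / mnlD S v := by
  have hv' : ∀ i ∈ S, 0 ≤ v' i := fun i hi => (hv i hi).trans (hvv' i hi)
  set Δ := ∑ i ∈ S, (v' i - v i) with hΔdef
  have hΔ : 0 ≤ Δ := Finset.sum_nonneg fun i hi => sub_nonneg.mpr (hvv' i hi)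
  set D := mnlD S v with hDdef
  set D' := mnlD S v' with hD'def
  have hD : 1 ≤ D := mnlD_one_le S v hv
  have hD0 : 0 < D := lt_of_lt_of_le one_pos hD
  have hDD' : D' = D + Δ := by
    simp only [hDdef, hD'def, hΔdef, mnlD, Finset.sum_sub_distrib]
    ring
  have hD'0 : 0 < D' := by rw [hDD']; linarith
  set N := 1 + ∑ i ∈ S.filter (fun i => r i ≤ x), v i with hNdef
  set N' := 1 + ∑ i ∈ S.filter (fun i => r i ≤ x), v' i with hN'def
  have hNN' : N ≤ N' := by
    have hs : ∑ i ∈ S.filter (fun i => r i ≤ x), v i ≤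
        ∑ i ∈ S.filter (fun i => r i ≤ x), v' i :=
      Finset.sum_le_sum (fun i hi => hvv' i (Finset.mem_filter.mp hi).1)
    simp only [hNdef, hN'def]
    linarith
  have hN'N : N' - N ≤ Δ := by
    have h1 : N' - N = ∑ i ∈ S.filter (fun i => r i ≤ x), (v' i - v i) := by
      simp only [hNdef, hN'def, Finset.sum_sub_distrib]; ring
    rw [h1, hΔdef]
    exact Finset.sum_le_sum_of_subset_of_nonneg (Finset.filter_subset _ _)
      (fun i hi _ => sub_nonneg.mpr (hvv' i hi))
  have hND : N ≤ D := by
    simp only [hNdef, hDdef, mnlD]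
    have := Finset.sum_le_sum_of_subset_of_nonneg (Finset.filter_subset (fun i => r i ≤ x) S)
      (fun i hi _ => hv i hi)
    linarith
  have hN : 0 < N := by
    have : 0 ≤ ∑ i ∈ S.filter (fun i => r i ≤ x), v i :=
      Finset.sum_nonneg fun i hi => hv i (Finset.mem_filter.mp hi).1
    simp only [hNdef]; linarith
  have hF : mnlCDF S r v x = N / D := by
    rw [mnlCDF, if_neg (not_lt.mpr hx)]
  have hF' : mnlCDF S r v' x = N' / D' := by
    rw [mnlCDF, if_neg (not_lt.mpr hx)]
  rw [hF, hF', abs_le]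
  constructor
  · rw [neg_le, neg_sub, div_sub_div _ _ hD0.ne' hD'0.ne',
      div_le_div_iff₀ (by positivity) hD0]
    rw [hDD']
    nlinarith [mul_nonneg (mul_nonneg hD0.le hD0.le) (sub_nonneg.mpr hNN'),
      mul_nonneg (mul_nonneg hΔ hD0.le) (sub_nonneg.mpr hND),
      mul_nonneg (mul_nonneg hΔ hΔ) hD0.le]
  · rw [div_sub_div _ _ hD'0.ne' hD0.ne', div_le_div_iff₀ (by positivity) hD0]
    rw [hDD']
    nlinarith [mul_nonneg (sub_nonneg.mpr hN'N) (mul_pos hD0 hD0).le,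
      mul_nonneg (mul_nonneg hΔ hN.le) hD0.le,
      mul_nonneg (mul_nonneg hΔ hΔ) hD0.le]

/-- **Proposition (CVaR: boundedness and Lipschitz condition).** -/
theorem cvar_bounded_and_lipschitz {ι : Type*} (S : Finset ι) (r : ι → ℝ)
    (hr : ∀ i ∈ S, 0 < r i ∧ r i ≤ 1) (α : ℝ) (hα0 : 0 < α) (hα1 : α ≤ 1) :
    (∀ v : ι → ℝ, (∀ i ∈ S, 0 ≤ v i ∧ v i ≤ 1) →
      0 ≤ mnlCVaR S r α v ∧ mnlCVaR S r α v ≤ 1) ∧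
    (∀ v v' : ι → ℝ, (∀ i ∈ S, 0 ≤ v i ∧ v i ≤ 1) → (∀ i ∈ S, 0 ≤ v' i ∧ v' i ≤ 1) →
      (∀ i ∈ S, v i ≤ v' i) →
      |mnlCVaR S r α v' - mnlCVaR S r α v| ≤
        ((3 / α) / mnlD S v) * ∑ i ∈ S, (v' i - v i)) := by
  constructor
  · intro v hv
    have hv0 : ∀ i ∈ S, 0 ≤ v i := fun i hi => (hv i hi).1
    set I := ∫ x in (0:ℝ)..1, min (mnlCDF S r v x) α with hI
    have hI0 : 0 ≤ I := by
      apply intervalIntegral.integral_nonneg (by norm_num)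
      intro x hx
      exact le_min (mnlCDF_nonneg S r v hv0 x) hα0.le
    have hIα : I ≤ α := by
      have h1 : I ≤ ∫ _ in (0:ℝ)..1, α := by
        apply intervalIntegral.integral_mono_on (by norm_num)
          (min_intIntegrable S r v hv0 α) intervalIntegrable_const
        intro x _
        exact min_le_right _ _
      simpa using h1
    constructor
    · apply mul_nonneg (by positivity)
      linarith
    · rw [mnlCVaR, ← hI, one_div_mul_eq_div, div_le_one hα0]
      linarith
  · intro v v' hv hv' hvv'
    have hv0 : ∀ i ∈ S, 0 ≤ v i := fun i hi => (hv i hi).1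
    have hv'0 : ∀ i ∈ S, 0 ≤ v' i := fun i hi => (hv' i hi).1
    set Δ := ∑ i ∈ S, (v' i - v i) with hΔdef
    have hΔ : 0 ≤ Δ := Finset.sum_nonneg fun i hi => sub_nonneg.mpr (hvv' i hi)
    have hD : 1 ≤ mnlD S v := mnlD_one_le S v hv0
    have hD0 : 0 < mnlD S v := lt_of_lt_of_le one_pos hD
    have key : mnlCVaR S r α v' - mnlCVaR S r α v =
        (1 / α) * ∫ x in (0:ℝ)..1,
          (min (mnlCDF S r v x) α - min (mnlCDF S r v' x) α) := by
      rw [mnlCVaR, mnlCVaR,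
        intervalIntegral.integral_sub (min_intIntegrable S r v hv0 α)
          (min_intIntegrable S r v' hv'0 α)]
      ring
    rw [key, abs_mul, abs_of_nonneg (by positivity : (0:ℝ) ≤ 1/α)]
    have hbound : |∫ x in (0:ℝ)..1,
        (min (mnlCDF S r v x) α - min (mnlCDF S r v' x) α)| ≤ (Δ / mnlD S v) * |1 - 0| := by
      rw [← Real.norm_eq_abs]
      apply intervalIntegral.norm_integral_le_of_norm_le_const
      intro x hx
      rw [Set.uIoc_of_le (by norm_num : (0:ℝ) ≤ 1)] at hx
      rw [Real.norm_eq_abs]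
      calc |min (mnlCDF S r v x) α - min (mnlCDF S r v' x) α|
          ≤ |mnlCDF S r v x - mnlCDF S r v' x| := min_lip _ _ _
        _ = |mnlCDF S r v' x - mnlCDF S r v x| := abs_sub_comm _ _
        _ ≤ Δ / mnlD S v := mnlCDF_diff S r v v' hv0 hvv' x hx.1.le
    calc (1/α) * |∫ x in (0:ℝ)..1,
          (min (mnlCDF S r v x) α - min (mnlCDF S r v' x) α)|
        ≤ (1/α) * ((Δ / mnlD S v) * |1 - 0|) := by
          apply mul_le_mul_of_nonneg_left hbound (by positivity)
      _ = Δ / (α * mnlD S v) := by rw [abs_of_nonneg (by norm_num : (0:ℝ) ≤ 1 - 0)]; ring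
      _ ≤ 3 * Δ / (α * mnlD S v) := by
          exact div_le_div_of_nonneg_right (by linarith) (by positivity)
      _ = ((3 / α) / mnlD S v) * Δ := by ring
end

section
/- Fix a weight ρ > 0 and define the mean-variance criterion U^{MV}_ρ(v) = U¹(v) − ρ·σ²(v), where U¹(v) = Σ_{i∈S} r_i v_i / D(v) and σ²(v) = Σ_{i∈S} r_i² v_i / D(v) − (U¹(v))². Then (a) |U^{MV}_ρ(v)| ≤ 1 + ρ/4 for every v ∈ [0,1]^S; and (b) for all v ≤ v' in [0,1]^S, |U^{MV}_ρ(v') − U^{MV}_ρ(v)| ≤ ((2 + 6ρ)/D(v)) · Σ_{i∈S}(v'_i − v_i). -/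
/-- The mean of the MNL purchase-profit distribution. -/
noncomputable def mnlMean {ι : Type*} (S : Finset ι) (r : ι → ℝ) (v : ι → ℝ) : ℝ :=
  (∑ i ∈ S, r i * v i) / mnlD S v

/-- The variance of the MNL purchase-profit distribution. -/
noncomputable def mnlVar {ι : Type*} (S : Finset ι) (r : ι → ℝ) (v : ι → ℝ) : ℝ :=
  (∑ i ∈ S, r i ^ 2 * v i) / mnlD S v - (mnlMean S r v) ^ 2

/-- The mean-variance criterion with weight `ρ` of the MNL purchase-profit distribution:
`U^MV_ρ(v) = U¹(v) − ρ σ²(v)`. -/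
noncomputable def mnlMeanVar {ι : Type*} (S : Finset ι) (r : ι → ℝ) (ρ : ℝ) (v : ι → ℝ) : ℝ :=
  mnlMean S r v - ρ * mnlVar S r v

section Aux

variable {ι : Type*} (S : Finset ι)

lemma mnlD_ge_one (v : ι → ℝ) (hv : ∀ i ∈ S, 0 ≤ v i ∧ v i ≤ 1) : 1 ≤ mnlD S v := by
  have : (0:ℝ) ≤ ∑ i ∈ S, v i := Finset.sum_nonneg fun i hi => (hv i hi).1
  simp [mnlD]; linarith

lemma sum_cv_bounds (c v : ι → ℝ) (hc : ∀ i ∈ S, 0 ≤ c i ∧ c i ≤ 1)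
    (hv : ∀ i ∈ S, 0 ≤ v i ∧ v i ≤ 1) :
    0 ≤ ∑ i ∈ S, c i * v i ∧ ∑ i ∈ S, c i * v i ≤ mnlD S v := by
  constructor
  · exact Finset.sum_nonneg fun i hi => mul_nonneg (hc i hi).1 (hv i hi).1
  · have h1 : ∑ i ∈ S, c i * v i ≤ ∑ i ∈ S, v i := by
      refine Finset.sum_le_sum fun i hi => ?_
      nlinarith [(hc i hi).1, (hc i hi).2, (hv i hi).1]
    simp only [mnlD]; linarith

/-- Lipschitz-type bound for ratios of the form `(∑ c v)/D(v)`. -/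
lemma ratio_lip (c v v' : ι → ℝ) (hc : ∀ i ∈ S, 0 ≤ c i ∧ c i ≤ 1)
    (hv : ∀ i ∈ S, 0 ≤ v i ∧ v i ≤ 1) (hv' : ∀ i ∈ S, 0 ≤ v' i ∧ v' i ≤ 1)
    (hle : ∀ i ∈ S, v i ≤ v' i) :
    |(∑ i ∈ S, c i * v' i) / mnlD S v' - (∑ i ∈ S, c i * v i) / mnlD S v| ≤
      2 * (∑ i ∈ S, (v' i - v i)) / mnlD S v := by
  set A := ∑ i ∈ S, c i * v i with hA
  set A' := ∑ i ∈ S, c i * v' i with hA'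
  set Δ := ∑ i ∈ S, (v' i - v i) with hΔdef
  have hD : 1 ≤ mnlD S v := mnlD_ge_one S v hv
  have hD' : 1 ≤ mnlD S v' := mnlD_ge_one S v' hv'
  have hDpos : 0 < mnlD S v := by linarith
  have hD'pos : 0 < mnlD S v' := by linarith
  have hΔ : 0 ≤ Δ := Finset.sum_nonneg fun i hi => sub_nonneg.2 (hle i hi)
  have hDD' : mnlD S v' = mnlD S v + Δ := by
    simp only [mnlD, hΔdef, Finset.sum_sub_distrib]; ring
  have hAbds := sum_cv_bounds S c v hc hv
  have hA'bds := sum_cv_bounds S c v' hc hv'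
  have hAA' : A ≤ A' := by
    refine Finset.sum_le_sum fun i hi => mul_le_mul_of_nonneg_left (hle i hi) (hc i hi).1
  have hdiff : A' - A ≤ Δ := by
    have : A' - A = ∑ i ∈ S, c i * (v' i - v i) := by
      simp [hA, hA', Finset.sum_sub_distrib, mul_sub]
    rw [this]
    refine Finset.sum_le_sum fun i hi => ?_
    nlinarith [(hc i hi).1, (hc i hi).2, hle i hi]
  have key : A' / mnlD S v' - A / mnlD S v =
      ((A' - A) * mnlD S v - A * Δ) / (mnlD S v * mnlD S v') := by
    rw [hDD']
    field_simp
    ring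
  rw [key, abs_div, abs_of_pos (mul_pos hDpos hD'pos), div_le_div_iff₀ (mul_pos hDpos hD'pos) hDpos]
  have hnum : |(A' - A) * mnlD S v - A * Δ| ≤ 2 * Δ * mnlD S v' := by
    rw [abs_le]
    constructor
    · nlinarith [hAbds.1, hAbds.2]
    · nlinarith [hAbds.1, hAbds.2]
  nlinarith [hnum, hΔ]

lemma mean_bounds (r v : ι → ℝ) (hr : ∀ i ∈ S, 0 < r i ∧ r i ≤ 1)
    (hv : ∀ i ∈ S, 0 ≤ v i ∧ v i ≤ 1) :
    0 ≤ mnlMean S r v ∧ mnlMean S r v ≤ 1 := by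
  have hD : 1 ≤ mnlD S v := mnlD_ge_one S v hv
  have hDpos : 0 < mnlD S v := by linarith
  have h := sum_cv_bounds S r v (fun i hi => ⟨le_of_lt (hr i hi).1, (hr i hi).2⟩) hv
  constructor
  · exact div_nonneg h.1 (le_of_lt hDpos)
  · rw [mnlMean, div_le_one hDpos]; exact h.2

lemma var_bounds (r v : ι → ℝ) (hr : ∀ i ∈ S, 0 < r i ∧ r i ≤ 1)
    (hv : ∀ i ∈ S, 0 ≤ v i ∧ v i ≤ 1) :
    0 ≤ mnlVar S r v ∧ mnlVar S r v ≤ 1 / 4 := by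
  have hD : 1 ≤ mnlD S v := mnlD_ge_one S v hv
  have hDpos : 0 < mnlD S v := by linarith
  set A := ∑ i ∈ S, r i * v i with hA
  set B := ∑ i ∈ S, r i ^ 2 * v i with hB
  have hBnn : 0 ≤ B := Finset.sum_nonneg fun i hi =>
    mul_nonneg (sq_nonneg _) (hv i hi).1
  have hCS : A ^ 2 ≤ B * mnlD S v := by
    have h := Finset.sum_mul_sq_le_sq_mul_sq S (fun i => r i * Real.sqrt (v i))
      (fun i => Real.sqrt (v i))
    have e1 : ∑ i ∈ S, (r i * Real.sqrt (v i)) * Real.sqrt (v i) = A := by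
      refine Finset.sum_congr rfl fun i hi => ?_
      rw [mul_assoc, Real.mul_self_sqrt (hv i hi).1]
    have e2 : ∑ i ∈ S, (r i * Real.sqrt (v i)) ^ 2 = B := by
      refine Finset.sum_congr rfl fun i hi => ?_
      rw [mul_pow, Real.sq_sqrt (hv i hi).1]
    have e3 : ∑ i ∈ S, (Real.sqrt (v i)) ^ 2 = ∑ i ∈ S, v i := by
      refine Finset.sum_congr rfl fun i hi => Real.sq_sqrt (hv i hi).1
    rw [e1, e2, e3] at h
    have hsum : ∑ i ∈ S, v i ≤ mnlD S v := by simp [mnlD]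
    nlinarith
  have hBA : B ≤ A := by
    refine Finset.sum_le_sum fun i hi => ?_
    nlinarith [mul_nonneg (mul_nonneg (le_of_lt (hr i hi).1) (hv i hi).1)
      (sub_nonneg.2 (hr i hi).2)]
  have hμ := mean_bounds S r v hr hv
  have hvareq : mnlVar S r v = (B * mnlD S v - A ^ 2) / mnlD S v ^ 2 := by
    rw [mnlVar, mnlMean]
    field_simp
    ring
  constructor
  · rw [hvareq]
    exact div_nonneg (by linarith) (sq_nonneg _)
  · have hμeq : mnlMean S r v = A / mnlD S v := rfl
    have h1 : mnlVar S r v ≤ mnlMean S r v - mnlMean S r v ^ 2 := by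
      rw [mnlVar, hμeq]
      have : B / mnlD S v ≤ A / mnlD S v := by gcongr
      linarith
    nlinarith [hμ.1, hμ.2, sq_nonneg (mnlMean S r v - 1/2)]

end Aux

/-- **Proposition (mean-variance: boundedness and Lipschitz condition).** -/
theorem mean_variance_bounded_and_lipschitz {ι : Type*} (S : Finset ι) (r : ι → ℝ)
    (hr : ∀ i ∈ S, 0 < r i ∧ r i ≤ 1) (ρ : ℝ) (hρ : 0 < ρ) :
    (∀ v : ι → ℝ, (∀ i ∈ S, 0 ≤ v i ∧ v i ≤ 1) →
      |mnlMeanVar S r ρ v| ≤ 1 + ρ / 4) ∧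
    (∀ v v' : ι → ℝ, (∀ i ∈ S, 0 ≤ v i ∧ v i ≤ 1) → (∀ i ∈ S, 0 ≤ v' i ∧ v' i ≤ 1) →
      (∀ i ∈ S, v i ≤ v' i) →
      |mnlMeanVar S r ρ v' - mnlMeanVar S r ρ v| ≤
        ((2 + 6 * ρ) / mnlD S v) * ∑ i ∈ S, (v' i - v i)) := by
  constructor
  · intro v hv
    have hμ := mean_bounds S r v hr hv
    have hσ := var_bounds S r v hr hv
    rw [mnlMeanVar, abs_le]
    constructor
    · nlinarith [hμ.1, hσ.2]
    · nlinarith [hμ.2, hσ.1]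
  · intro v v' hv hv' hle
    have hD : 1 ≤ mnlD S v := mnlD_ge_one S v hv
    have hDpos : 0 < mnlD S v := by linarith
    set Δ := ∑ i ∈ S, (v' i - v i) with hΔdef
    have hΔ : 0 ≤ Δ := Finset.sum_nonneg fun i hi => sub_nonneg.2 (hle i hi)
    set L := Δ / mnlD S v with hLdef
    have hL : 0 ≤ L := div_nonneg hΔ (le_of_lt hDpos)
    -- mean Lipschitz
    have h1 : |mnlMean S r v' - mnlMean S r v| ≤ 2 * L := by
      have := ratio_lip S r v v' (fun i hi => ⟨le_of_lt (hr i hi).1, (hr i hi).2⟩) hv hv' hle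
      rw [hLdef, mul_div_assoc] at *
      exact this
    -- second moment Lipschitz
    have h2 : |(∑ i ∈ S, r i ^ 2 * v' i) / mnlD S v' -
        (∑ i ∈ S, r i ^ 2 * v i) / mnlD S v| ≤ 2 * L := by
      have hc : ∀ i ∈ S, 0 ≤ r i ^ 2 ∧ r i ^ 2 ≤ 1 := fun i hi =>
        ⟨sq_nonneg _, by nlinarith [(hr i hi).1, (hr i hi).2]⟩
      have := ratio_lip S (fun i => r i ^ 2) v v' hc hv hv' hle
      rw [hLdef, mul_div_assoc] at *
      exact this
    have hμ := mean_bounds S r v hr hv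
    have hμ' := mean_bounds S r v' hr hv'
    -- squared mean Lipschitz
    have h3 : |mnlMean S r v' ^ 2 - mnlMean S r v ^ 2| ≤ 4 * L := by
      rw [abs_le] at h1 ⊢
      constructor
      · nlinarith [hμ.1, hμ.2, hμ'.1, hμ'.2, h1.1, h1.2]
      · nlinarith [hμ.1, hμ.2, hμ'.1, hμ'.2, h1.1, h1.2]
    have goal_eq : ((2 + 6 * ρ) / mnlD S v) * Δ = (2 + 6 * ρ) * L := by
      rw [hLdef]; ring
    rw [goal_eq]
    have expand : mnlMeanVar S r ρ v' - mnlMeanVar S r ρ v =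
        (mnlMean S r v' - mnlMean S r v) -
        ρ * ((∑ i ∈ S, r i ^ 2 * v' i) / mnlD S v' - (∑ i ∈ S, r i ^ 2 * v i) / mnlD S v) +
        ρ * (mnlMean S r v' ^ 2 - mnlMean S r v ^ 2) := by
      rw [mnlMeanVar, mnlMeanVar, mnlVar, mnlVar]; ring
    rw [expand]
    calc |(mnlMean S r v' - mnlMean S r v) -
        ρ * ((∑ i ∈ S, r i ^ 2 * v' i) / mnlD S v' - (∑ i ∈ S, r i ^ 2 * v i) / mnlD S v) +
        ρ * (mnlMean S r v' ^ 2 - mnlMean S r v ^ 2)|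
        ≤ |mnlMean S r v' - mnlMean S r v| +
          |ρ * ((∑ i ∈ S, r i ^ 2 * v' i) / mnlD S v' - (∑ i ∈ S, r i ^ 2 * v i) / mnlD S v)| +
          |ρ * (mnlMean S r v' ^ 2 - mnlMean S r v ^ 2)| := by
            exact (abs_add_le _ _).trans (by gcongr; exact abs_sub _ _)
      _ ≤ 2 * L + ρ * (2 * L) + ρ * (4 * L) := by
            rw [abs_mul, abs_mul, abs_of_pos hρ]
            gcongr
      _ = (2 + 6 * ρ) * L := by ring
end
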